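/- arXiv:2406.05368 — 2 statements merged into one kernel-verified Lean document; each statement's English description precedes it below -/
import Mathlib

section
/- Haar wavelets on Q_p have exactly one vanishing moment at the filter level: if h(k/p) = 1 for all k = 0,...,p-1 and the matrix with columns (1/√p)h, (1/√p)h_1, ..., (1/√p)h_{p-1} is unitary, then each filter h_j satisfies ∑_{k=0}^{p-1} h_j(k/p) = 0, but there is no j and no μ > 0 with both ∑_k h_j(k/p) = 0 and ∑_{k=1}^{p-1} h_j(k/p)·p^μ = 0 unless h_j(0) = 0, which contradicts unitarity holding for all j simultaneously. -/
/-- Haar wavelets on `ℚ_p` have exactly one vanishing moment at the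
filter level: if `h(k/p) = 1` for all `k` and the matrix with columns
`(1/√p)h, (1/√p)h₁, …, (1/√p)h_{p-1}` is unitary, then each filter `h_j`
(`j ≠ 0`) satisfies `∑_k h_j(k/p) = 0`; moreover for `j ≠ 0` and `μ > 0`,
`∑_k h_j(k/p) = 0` together with `∑_{k=1}^{p-1} h_j(k/p)·p^μ = 0` forces
`h_j(0) = 0`; and it is impossible that `h_j(0) = 0` for all `j ≠ 0`
simultaneously. Here `H j` is the `j`-th filter, `H 0 = h = (1,…,1)`. -/
theorem stmt5 (p : ℕ) (hp : p.Prime) [NeZero p] (H : Fin p → Fin p → ℂ)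
    (hH0 : ∀ k, H 0 k = 1)
    (hunit : (Matrix.of fun k j : Fin p => ((1 / Real.sqrt p : ℝ) : ℂ) * H j k) ∈
      Matrix.unitaryGroup (Fin p) ℂ) :
    (∀ j : Fin p, j ≠ 0 → ∑ k : Fin p, H j k = 0) ∧
    (∀ j : Fin p, j ≠ 0 → ∀ μ : ℝ, 0 < μ →
      (∑ k : Fin p, H j k = 0 ∧
        ∑ k ∈ Finset.univ \ {(0 : Fin p)}, H j k * (((p : ℝ) ^ μ : ℝ) : ℂ) = 0) →
      H j 0 = 0) ∧
    ¬ ∀ j : Fin p, j ≠ 0 → H j 0 = 0 := by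
  have hppos : 0 < (p : ℝ) := by exact_mod_cast hp.pos
  set c : ℂ := ((1 / Real.sqrt p : ℝ) : ℂ) with hc
  have hcne : c ≠ 0 := by
    simp only [hc, Complex.ofReal_ne_zero]
    positivity
  set M : Matrix (Fin p) (Fin p) ℂ := Matrix.of fun k j : Fin p => c * H j k with hM
  have h1 : star M * M = 1 := Matrix.UnitaryGroup.star_mul_self ⟨M, hunit⟩
  have h2 : M * star M = 1 := by
    have := Matrix.mem_unitaryGroup_iff.mp hunit
    simpa using this
  constructor
  · intro j hj
    have hent := congrFun (congrFun h1 0) j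
    have : (∑ k : Fin p, (starRingEnd ℂ) (M k 0) * M k j) = 0 := by
      rw [Matrix.mul_apply] at hent
      simpa [Matrix.one_apply, (Ne.symm hj), Matrix.conjTranspose_apply] using hent
    have hsum : (starRingEnd ℂ) c * c * ∑ k : Fin p, H j k = 0 := by
      rw [Finset.mul_sum]
      rw [← this]
      apply Finset.sum_congr rfl
      intro k _
      simp [hM, hH0 k]
      ring
    have : (starRingEnd ℂ) c * c ≠ 0 := mul_ne_zero (by simpa using hcne) hcne
    exact (mul_eq_zero.mp hsum).resolve_left this
  constructor
  · intro j hj μ hμ ⟨hs1, hs2⟩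
    have hpne : (((p : ℝ) ^ μ : ℝ) : ℂ) ≠ 0 := by
      simp [Complex.ofReal_ne_zero]
      positivity
    have hs2' : ∑ k ∈ Finset.univ \ {(0 : Fin p)}, H j k = 0 := by
      rw [← Finset.sum_mul] at hs2
      exact (mul_eq_zero.mp hs2).resolve_right hpne
    have : H j 0 + ∑ k ∈ Finset.univ \ {(0 : Fin p)}, H j k = ∑ k : Fin p, H j k := by
      rw [Finset.sdiff_eq_filter]
      rw [← Finset.sum_filter_add_sum_filter_not Finset.univ (fun k => k = (0 : Fin p)) (H j)]
      congr 1
      · simp [Finset.filter_eq']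
      · congr 1
        ext k
        simp
    rw [hs2', add_zero, hs1] at this
    exact this
  · intro hall
    have hent := congrFun (congrFun h2 0) 0
    rw [Matrix.mul_apply] at hent
    have : (∑ j : Fin p, M 0 j * (starRingEnd ℂ) (M 0 j)) = 1 := by
      simpa [Matrix.one_apply, Matrix.conjTranspose_apply] using hent
    have hsum : (∑ j : Fin p, M 0 j * (starRingEnd ℂ) (M 0 j)) = c * (starRingEnd ℂ) c := by
      rw [Finset.sum_eq_single 0]
      · simp [hM, hH0]
      · intro j _ hj
        simp [hM, hall j hj]
      · simp
    rw [hsum] at this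
    have hcc : c * (starRingEnd ℂ) c = ((1 / p : ℝ) : ℂ) := by
      rw [hc, Complex.conj_ofReal, ← Complex.ofReal_mul]
      congr 1
      rw [div_mul_div_comm, one_mul, Real.mul_self_sqrt hppos.le]
    rw [hcc] at this
    have : (1 / p : ℝ) = 1 := by exact_mod_cast this
    have : (p : ℝ) = 1 := by field_simp at this; linarith
    have : p = 1 := by exact_mod_cast this
    exact hp.one_lt.ne' this
end

section
/- For Haar-type wavelet filters h_j(l/p^{s+1}) = ∑_{ν=1}^{p-1} α^j_{ν,k} e^{2πiνr/p} (l = k + r·p^s), one has for every μ > 0 the identity ∑_{l=1}^{p^{s+1}-1} |l/p^{s+1}|_p^μ · h_j(l/p^{s+1}) = -p^μ · ∑_{ν=1}^{p-1} α^j_{ν,0}. Consequently, the filter h_j has discrete p-vanishing moments of all orders if and only if h_j(0) = ∑_{ν=1}^{p-1} α^j_{ν,0} = 0. -/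
/-!
Write `l = k + r p^s` with `k < p^s`, `r < p`. For `k ≠ 0` the weight `|l/p^{s+1}|_p^μ` does
not depend on `r` (ultrametric inequality), so the block of `k` contributes a multiple of
`∑_{r<p} e^{2πiνr/p} = 0`. Only the block `k = 0` survives: there the weight vanishes at `l = 0`
and equals `p^μ` for `r ≠ 0`, and `∑_{r=1}^{p-1} e^{2πiνr/p} = -1`.
-/

open Finset Complex

lemma sum_range_exp_two_pi_I_mul_div_eq_zero {n ν : ℕ} (hν : ν ≠ 0) (hνn : ν < n) :
    ∑ r ∈ range n, exp (2 * Real.pi * I * ν * r / n) = 0 := by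
  have hprim := isPrimitiveRoot_exp n (by omega)
  set z := exp (2 * Real.pi * I / n) ^ ν
  have hz : z ≠ 1 := hprim.pow_ne_one_of_pos_of_lt hν hνn
  have hzn : z ^ n = 1 := by rw [← pow_mul, mul_comm ν n, pow_mul, hprim.pow_eq_one, one_pow]
  calc ∑ r ∈ range n, exp (2 * Real.pi * I * ν * r / n)
      = ∑ r ∈ range n, z ^ r := by
        refine sum_congr rfl fun r _ => ?_
        rw [← pow_mul, ← exp_nat_mul]
        push_cast
        ring_nf
    _ = 0 := by rw [geom_sum_eq hz, hzn, sub_self, zero_div]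

lemma sum_range_sum_mul_exp_eq_zero {n : ℕ} (a : ℕ → ℂ) :
    ∑ r ∈ range n, ∑ ν ∈ Ico 1 n, a ν * exp (2 * Real.pi * I * ν * r / n) = 0 := by
  rw [sum_comm]
  refine sum_eq_zero fun ν hν => ?_
  rw [← mul_sum, sum_range_exp_two_pi_I_mul_div_eq_zero (by simp at hν; omega) (mem_Ico.1 hν).2,
    mul_zero]

lemma sum_Ico_sum_mul_exp_eq_neg_sum {n : ℕ} (a : ℕ → ℂ) :
    ∑ r ∈ Ico 1 n, ∑ ν ∈ Ico 1 n, a ν * exp (2 * Real.pi * I * ν * r / n)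
      = -∑ ν ∈ Ico 1 n, a ν := by
  rcases Nat.eq_zero_or_pos n with rfl | hn
  · simp
  have h := sum_range_sum_mul_exp_eq_zero (n := n) a
  rw [sum_range_eq_add_Ico _ hn] at h
  simpa [eq_neg_iff_add_eq_zero, add_comm] using h

lemma Finset.sum_range_mul_eq_sum_sum {M : Type*} [AddCommMonoid M] (f : ℕ → M) (m n : ℕ) :
    ∑ l ∈ range (m * n), f l = ∑ k ∈ range m, ∑ r ∈ range n, f (k + r * m) := by
  induction n with
  | zero => simp
  | succ n ih =>
    rw [Nat.mul_succ, sum_range_add, ih, ← sum_add_distrib]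
    refine sum_congr rfl fun k _ => ?_
    rw [sum_range_succ, add_comm (m * n) k, mul_comm m n]

theorem sum_range_pow_succ_mul_eq_neg_mul_sum {p s : ℕ} {α : ℕ → ℕ → ℂ} {h w : ℕ → ℂ} {c : ℂ}
    (hh : ∀ r k : ℕ, r < p → k < p ^ s →
      h (k + r * p ^ s) = ∑ ν ∈ Ico 1 p, α ν k * exp (2 * Real.pi * I * ν * r / p))
    (hw_zero : w 0 = 0) (hw_multiple : ∀ r, r ≠ 0 → r < p → w (r * p ^ s) = c)
    (hw_periodic : ∀ k r, k ≠ 0 → k < p ^ s → w (k + r * p ^ s) = w k) :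
    ∑ l ∈ range (p ^ (s + 1)), w l * h l = -c * ∑ ν ∈ Ico 1 p, α ν 0 := by
  rcases p.eq_zero_or_pos with rfl | hp
  · simp
  have block_zero : ∑ r ∈ range p, w (0 + r * p ^ s) * h (0 + r * p ^ s)
      = -c * ∑ ν ∈ Ico 1 p, α ν 0 := by
    rw [sum_range_eq_add_Ico _ hp, zero_mul, zero_add, hw_zero, zero_mul, zero_add,
      neg_mul, ← mul_neg, ← sum_Ico_sum_mul_exp_eq_neg_sum, mul_sum]
    refine sum_congr rfl fun r hr => ?_
    obtain ⟨hr1, hrp⟩ := mem_Ico.1 hr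
    rw [hh r 0 hrp (pow_pos hp s), zero_add, hw_multiple r (by omega) hrp]
  have block_ne_zero : ∀ k ∈ Ico 1 (p ^ s),
      ∑ r ∈ range p, w (k + r * p ^ s) * h (k + r * p ^ s) = 0 := by
    intro k hk
    obtain ⟨hk1, hks⟩ := mem_Ico.1 hk
    calc ∑ r ∈ range p, w (k + r * p ^ s) * h (k + r * p ^ s)
        = w k * ∑ r ∈ range p, ∑ ν ∈ Ico 1 p, α ν k * exp (2 * Real.pi * I * ν * r / p) := by
          rw [mul_sum]
          refine sum_congr rfl fun r hr => ?_
          rw [hw_periodic k r (by omega) hks, hh r k (mem_range.1 hr) hks]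
      _ = 0 := by rw [sum_range_sum_mul_exp_eq_zero, mul_zero]
  rw [pow_succ, sum_range_mul_eq_sum_sum, sum_range_eq_add_Ico _ (pow_pos hp s), block_zero,
    sum_eq_zero block_ne_zero, add_zero]

namespace Padic

variable {p : ℕ} [Fact p.Prime]

lemma norm_natCast_add_of_not_dvd_of_dvd {s k m : ℕ} (hk : ¬ p ^ s ∣ k) (hm : p ^ s ∣ m) :
    ‖((k + m : ℕ) : ℚ_[p])‖ = ‖(k : ℚ_[p])‖ := by
  have hle : ∀ n : ℕ, ‖(n : ℚ_[p])‖ ≤ (p : ℝ) ^ (-s : ℤ) ↔ p ^ s ∣ n := fun n => by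
    have h := norm_int_le_pow_iff_dvd (p := p) n s
    rwa [Int.cast_natCast, ← Nat.cast_pow, Int.natCast_dvd_natCast] at h
  have hlt : ‖(m : ℚ_[p])‖ < ‖(k : ℚ_[p])‖ :=
    ((hle m).2 hm).trans_lt (not_le.1 (mt (hle k).1 hk))
  rw [Nat.cast_add, add_eq_max_of_ne hlt.ne', max_eq_left hlt.le]

lemma norm_natCast_mul_pow_div_pow_succ {r : ℕ} (hr : p.Coprime r) (s : ℕ) :
    ‖((r * p ^ s : ℕ) : ℚ_[p]) / (p : ℚ_[p]) ^ (s + 1)‖ = p := by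
  have hp : (p : ℝ) ≠ 0 := by exact_mod_cast (Fact.out : p.Prime).ne_zero
  rw [Nat.cast_mul, Nat.cast_pow, norm_div, norm_mul, norm_natCast_eq_one_iff.2 hr, one_mul,
    norm_p_pow, norm_p_pow, ← zpow_sub₀ hp]
  norm_num

end Padic

theorem sum_Ico_norm_rpow_mul_eq_neg_rpow_mul_sum {p : ℕ} [Fact p.Prime] {s : ℕ}
    {α : ℕ → ℕ → ℂ} {h : ℕ → ℂ}
    (hh : ∀ r k : ℕ, r < p → k < p ^ s →
      h (k + r * p ^ s) = ∑ ν ∈ Ico 1 p, α ν k * exp (2 * Real.pi * I * ν * r / p))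
    {μ : ℝ} (hμ : 0 < μ) :
    ∑ l ∈ Ico 1 (p ^ (s + 1)),
        ((‖((l : ℚ_[p]) / (p : ℚ_[p]) ^ (s + 1))‖ ^ μ : ℝ) : ℂ) * h l
      = -(((p : ℝ) ^ μ : ℝ) : ℂ) * ∑ ν ∈ Ico 1 p, α ν 0 := by
  have hp : p.Prime := Fact.out
  set w : ℕ → ℂ := fun l => ((‖((l : ℚ_[p]) / (p : ℚ_[p]) ^ (s + 1))‖ ^ μ : ℝ) : ℂ)
  have hw_zero : w 0 = 0 := by simp [w, Real.zero_rpow hμ.ne']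
  have hw_multiple : ∀ r, r ≠ 0 → r < p → w (r * p ^ s) = ((p : ℝ) ^ μ : ℝ) := fun r hr hrp => by
    simp only [w, Padic.norm_natCast_mul_pow_div_pow_succ (Nat.coprime_of_lt_prime hr hrp hp)]
  have hw_periodic : ∀ k r, k ≠ 0 → k < p ^ s → w (k + r * p ^ s) = w k := fun k r hk hks => by
    simp only [w, norm_div, Padic.norm_natCast_add_of_not_dvd_of_dvd
      (Nat.not_dvd_of_pos_of_lt (Nat.pos_of_ne_zero hk) hks) (dvd_mul_left _ _)]
  have h_range := sum_range_pow_succ_mul_eq_neg_mul_sum hh hw_zero hw_multiple hw_periodic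
  rwa [sum_range_eq_add_Ico _ (pow_pos hp.pos _), hw_zero, zero_mul, zero_add] at h_range

/-- For Haar-type wavelet filters
`h(l/p^{s+1}) = ∑_{ν=1}^{p-1} α_{ν,k} e^{2πiνr/p}` (`l = k + r·p^s`), for every
`μ > 0` one has `∑_{l=1}^{p^{s+1}-1} |l/p^{s+1}|_p^μ · h(l/p^{s+1})
= -p^μ · ∑_{ν=1}^{p-1} α_{ν,0}`; consequently the filter has discrete
p-vanishing moments of all orders iff `h(0) = ∑_{ν=1}^{p-1} α_{ν,0} = 0`.
Here `h l` denotes `h(l/p^{s+1})` and `|·|` is the p-adic absolute value. -/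
theorem stmt12 (p : ℕ) [Fact p.Prime] (s : ℕ) (α : ℕ → ℕ → ℂ) (h : ℕ → ℂ)
    (hh : ∀ r k : ℕ, r < p → k < p ^ s →
      h (k + r * p ^ s) = ∑ ν ∈ Finset.Ico 1 p,
        α ν k * Complex.exp (2 * Real.pi * Complex.I * ν * r / p)) :
    (∀ μ : ℝ, 0 < μ →
      ∑ l ∈ Finset.Ico 1 (p ^ (s + 1)),
          ((‖((l : ℚ_[p]) / (p : ℚ_[p]) ^ (s + 1))‖ ^ μ : ℝ) : ℂ) * h l
        = -(((p : ℝ) ^ μ : ℝ) : ℂ) * ∑ ν ∈ Finset.Ico 1 p, α ν 0) ∧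
    ((∀ μ : ℝ, 0 < μ →
      ∑ l ∈ Finset.Ico 1 (p ^ (s + 1)),
          ((‖((l : ℚ_[p]) / (p : ℚ_[p]) ^ (s + 1))‖ ^ μ : ℝ) : ℂ) * h l = 0) ↔
      ∑ ν ∈ Finset.Ico 1 p, α ν 0 = 0) := by
  have moment := fun μ (hμ : (0 : ℝ) < μ) => sum_Ico_norm_rpow_mul_eq_neg_rpow_mul_sum hh hμ
  refine ⟨moment, fun h_vanish => ?_, fun h_zero μ hμ => by rw [moment μ hμ, h_zero, mul_zero]⟩
  have hp : (p : ℂ) ≠ 0 := Nat.cast_ne_zero.2 (Fact.out : p.Prime).ne_zero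
  simpa [hp] using (moment 1 one_pos).symm.trans (h_vanish 1 one_pos)
end
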